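/- Let H be a complex Hilbert space, T a bounded self-adjoint operator on H, and a a bounded operator on H. Write R_λ = (1 + λ² + T²)⁻¹ for λ ≥ 0 and F = f(T), the continuous functional calculus of f(x) = x/√(1 + x²) applied to T. Then the map λ ↦ R_λ ∘ ((1 + λ²)(T∘a − a∘T) + T∘(a∘T − T∘a)∘T) ∘ R_λ is Bochner integrable on [0, ∞), and F∘a − a∘F = (2/π) · ∫₀^∞ R_λ ∘ ((1 + λ²)(T∘a − a∘T) + T∘(a∘T − T∘a)∘T) ∘ R_λ dλ. -/

import Mathlib

/-!
Write `U_λ = (1 + λ²) + T²`, so that `R_λ = U_λ⁻¹`. The integrand's middle factor is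
`(Ta) U_λ - U_λ (aT)`, hence the integrand equals `R_λ (Ta) - (aT) R_λ`. Since `R_λ` is the
functional calculus of `x ↦ (1 + λ² + x²)⁻¹`, integrating under the functional calculus and using
`∫₀^∞ (b + λ²)⁻¹ dλ = π / (2 √b)` gives `∫₀^∞ R_λ dλ = g(T)` with `g(x) = π / (2 √(1 + x²))`.
Finally `g(x) x = (π / 2) f(x)`, so `g(T) T = T g(T) = (π / 2) F`.
-/

open MeasureTheory

/-- The resolvent `(1 + l² + T²)⁻¹` of a bounded operator `T` on a complex Hilbert
space (via `Ring.inverse`, which gives the honest inverse when it exists). -/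
noncomputable def resolvent3 {H : Type*} [NormedAddCommGroup H] [InnerProductSpace ℂ H]
    [CompleteSpace H] (T : H →L[ℂ] H) (l : ℝ) : H →L[ℂ] H :=
  Ring.inverse (((1 + l ^ 2 : ℝ) : ℂ) • (1 : H →L[ℂ] H) + T ^ 2)

section

open Set Real

lemma integral_Ioi_inv_sq_add_sq {c : ℝ} (hc : 0 < c) :
    ∫ l in Ioi (0 : ℝ), (c ^ 2 + l ^ 2)⁻¹ = π / (2 * c) := by
  have hscale : ∀ l : ℝ, (c ^ 2 + l ^ 2)⁻¹ = c⁻¹ ^ 2 * (1 + (c⁻¹ * l) ^ 2)⁻¹ := fun l => by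
    field_simp
  simp_rw [hscale]
  rw [integral_const_mul, integral_comp_mul_left_Ioi (fun u => (1 + u ^ 2)⁻¹) 0 (inv_pos.2 hc)]
  simp only [mul_zero, integral_Ioi_inv_one_add_sq, arctan_zero, sub_zero, smul_eq_mul, inv_inv]
  field_simp

lemma setIntegral_Ici_inv_one_add_sq_add_sq (x : ℝ) :
    ∫ l in Ici (0 : ℝ), (1 + l ^ 2 + x ^ 2)⁻¹ = π / (2 * √(1 + x ^ 2)) := by
  have hsqrt : √(1 + x ^ 2) ^ 2 = 1 + x ^ 2 := sq_sqrt (by positivity)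
  rw [integral_Ici_eq_integral_Ioi, ← integral_Ioi_inv_sq_add_sq (sqrt_pos.2 (by positivity)),
    hsqrt]
  congr! 2 with l
  ring

section RingIdentities

variable {R A : Type*} [CommSemiring R] [Ring A] [Algebra R A]

lemma smul_commutator_add_mul_commutator_mul (c : R) (t a : A) :
    c • (t * a - a * t) + t * (a * t - t * a) * t
      = t * a * (c • 1 + t ^ 2) - (c • 1 + t ^ 2) * (a * t) := by
  simp only [mul_add, add_mul, mul_sub, sub_mul, smul_sub, mul_smul_comm, smul_mul_assoc,
    mul_one, one_mul, pow_two, mul_assoc]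
  abel

lemma mul_sub_mul_mul_of_mul_eq_one {r u : A} (hru : r * u = 1) (hur : u * r = 1) (x y : A) :
    r * (x * u - u * y) * r = r * x - y * r := by
  rw [mul_sub, sub_mul, ← mul_assoc r x, mul_assoc (r * x), hur, mul_one, ← mul_assoc r u, hru,
    one_mul]

end RingIdentities

variable {H : Type*} [NormedAddCommGroup H] [InnerProductSpace ℂ H] [CompleteSpace H]
  {T : H →L[ℂ] H}

lemma smul_one_add_sq_eq_cfc (hT : IsSelfAdjoint T) (c : ℝ) :
    (c : ℂ) • (1 : H →L[ℂ] H) + T ^ 2 = cfc (fun x : ℝ => c + x ^ 2) T := by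
  rw [cfc_const_add .., cfc_pow_id .., Algebra.algebraMap_eq_smul_one, Complex.coe_smul]

lemma isUnit_smul_one_add_sq (hT : IsSelfAdjoint T) (l : ℝ) :
    IsUnit (((1 + l ^ 2 : ℝ) : ℂ) • (1 : H →L[ℂ] H) + T ^ 2) := by
  rw [smul_one_add_sq_eq_cfc hT, isUnit_cfc_iff ..]
  intro x _
  positivity

lemma resolvent3_eq_cfc (hT : IsSelfAdjoint T) (l : ℝ) :
    resolvent3 T l = cfc (fun x : ℝ => (1 + l ^ 2 + x ^ 2)⁻¹) T := by
  rw [cfc_inv _ _ (fun x _ => by positivity), resolvent3, smul_one_add_sq_eq_cfc hT]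

lemma resolvent3_mul_mul_resolvent3 (hT : IsSelfAdjoint T) (a : H →L[ℂ] H) (l : ℝ) :
    resolvent3 T l * (((1 + l ^ 2 : ℝ) : ℂ) • (T * a - a * T) + T * (a * T - T * a) * T) *
        resolvent3 T l
      = resolvent3 T l * (T * a) - a * T * resolvent3 T l := by
  have hU := isUnit_smul_one_add_sq hT l
  rw [smul_commutator_add_mul_commutator_mul]
  exact mul_sub_mul_mul_of_mul_eq_one (Ring.inverse_mul_cancel _ hU)
    (Ring.mul_inverse_cancel _ hU) _ _

lemma continuousOn_uncurry_inv_one_add_sq_add_sq (s : Set ℝ) :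
    ContinuousOn (Function.uncurry fun (l x : ℝ) => (1 + l ^ 2 + x ^ 2)⁻¹) (Ici 0 ×ˢ s) :=
  (Continuous.continuousOn (by fun_prop)).inv₀ fun _ _ => by positivity

lemma norm_inv_one_add_sq_add_sq_le (l x : ℝ) : ‖(1 + l ^ 2 + x ^ 2)⁻¹‖ ≤ (1 + l ^ 2)⁻¹ := by
  rw [norm_of_nonneg (by positivity)]
  exact inv_anti₀ (by positivity) (by nlinarith)

lemma integrableOn_resolvent3 (hT : IsSelfAdjoint T) : IntegrableOn (resolvent3 T) (Ici 0) := by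
  simp_rw [funext (resolvent3_eq_cfc hT)]
  exact integrableOn_cfc measurableSet_Ici _ _ T (continuousOn_uncurry_inv_one_add_sq_add_sq _)
    (.of_forall fun l _ _ => norm_inv_one_add_sq_add_sq_le l _)
    integrable_inv_one_add_sq.integrableOn.hasFiniteIntegral

lemma setIntegral_resolvent3 (hT : IsSelfAdjoint T) :
    ∫ l in Ici 0, resolvent3 T l = cfc (fun x : ℝ => π / (2 * √(1 + x ^ 2))) T := by
  simp_rw [resolvent3_eq_cfc hT, ← setIntegral_Ici_inv_one_add_sq_add_sq]
  exact (cfc_setIntegral measurableSet_Ici _ _ T (continuousOn_uncurry_inv_one_add_sq_add_sq _)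
    (.of_forall fun l _ _ => norm_inv_one_add_sq_add_sq_le l _)
    integrable_inv_one_add_sq.integrableOn.hasFiniteIntegral).symm

lemma setIntegral_resolvent3_mul_self (hT : IsSelfAdjoint T) :
    (∫ l in Ici 0, resolvent3 T l) * T
      = (π / 2 : ℝ) • cfc (fun x : ℝ => x / √(1 + x ^ 2)) T := by
  have hsqrt : ∀ x : ℝ, √(1 + x ^ 2) ≠ 0 := fun x => (sqrt_pos.2 (by positivity)).ne'
  rw [setIntegral_resolvent3 hT]
  conv_lhs => arg 2; rw [← cfc_id' ℝ T]
  rw [← cfc_mul .., ← cfc_const_mul ..]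
  refine cfc_congr fun x _ => ?_
  field_simp [hsqrt x]

lemma self_mul_setIntegral_resolvent3 (hT : IsSelfAdjoint T) :
    T * ∫ l in Ici 0, resolvent3 T l
      = (π / 2 : ℝ) • cfc (fun x : ℝ => x / √(1 + x ^ 2)) T := by
  rw [← setIntegral_resolvent3_mul_self hT, setIntegral_resolvent3 hT]
  exact ((Commute.refl T).cfc_real _).eq.symm

end

/-- The commutator integral formula: for a bounded self-adjoint `T`, a bounded
operator `a`, `R_l = (1 + l² + T²)⁻¹` and `F = f(T)` with `f(x) = x / √(1 + x²)`,
the map `l ↦ R_l ((1 + l²)[T,a] + T [a,T] T) R_l` is Bochner integrable on `[0, ∞)`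
and `[F, a] = (2/π) ∫₀^∞ R_l ((1 + l²)[T,a] + T [a,T] T) R_l dl`. -/
theorem stmt3 {H : Type*} [NormedAddCommGroup H] [InnerProductSpace ℂ H] [CompleteSpace H]
    (T : H →L[ℂ] H) (hT : IsSelfAdjoint T) (a : H →L[ℂ] H) :
    IntegrableOn
      (fun l : ℝ =>
        resolvent3 T l *
          (((1 + l ^ 2 : ℝ) : ℂ) • (T * a - a * T) + T * (a * T - T * a) * T) *
          resolvent3 T l)
      (Set.Ici 0) volume ∧
    cfc (fun x : ℝ => x / Real.sqrt (1 + x ^ 2)) T * a -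
        a * cfc (fun x : ℝ => x / Real.sqrt (1 + x ^ 2)) T =
      ((2 / Real.pi : ℝ) : ℂ) •
        ∫ l in Set.Ici (0 : ℝ),
          resolvent3 T l *
            (((1 + l ^ 2 : ℝ) : ℂ) • (T * a - a * T) + T * (a * T - T * a) * T) *
            resolvent3 T l := by
  have hR := integrableOn_resolvent3 hT
  simp_rw [resolvent3_mul_mul_resolvent3 hT a]
  refine ⟨(hR.mul_const _).sub (hR.const_mul _), ?_⟩
  rw [integral_sub (hR.mul_const _) (hR.const_mul _), integral_mul_const_of_integrable hR,
    integral_const_mul_of_integrable hR, ← mul_assoc, setIntegral_resolvent3_mul_self hT,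
    mul_assoc, self_mul_setIntegral_resolvent3 hT, smul_mul_assoc, mul_smul_comm, ← smul_sub,
    Complex.coe_smul, smul_smul, div_mul_div_cancel₀ Real.pi_ne_zero, div_self two_ne_zero, one_smul]
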